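/- Let actions act on states q = (x, ℓ) ∈ X × L where each action a satisfies: if q.L = q'.L then a(q).L = a(q').L (discrete part depends only on discrete part), and ε-independent actions a, b satisfy ab(q).L = ba(q).L for all q. Then for any two ε-equivalent traces τ ≡_ε τ' and any states q₀, q₀' with q₀.L = q₀'.L, the final discrete states agree: τ applied to q₀ and τ' applied to q₀' yield states with equal L-components. -/

import Mathlib

/-- Apply a trace (finite sequence of actions) from left to right. -/
def applyTrace {S : Type*} (τ : List (S → S)) (x : S) : S :=
  τ.foldl (fun y f => f y) x

/-- One swap of an adjacent pair of `indep`-related actions. -/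
def Swap {A : Type*} (indep : A → A → Prop) (τ τ' : List A) : Prop :=
  ∃ (σ η : List A) (a b : A), indep a b ∧ τ = σ ++ a :: b :: η ∧ τ' = σ ++ b :: a :: η

/-- `ε`-independence of actions on states `(x, ℓ) ∈ X × L`: the discrete parts commute
exactly and the continuous parts are `ε`-close. -/
def SIndep {X L : Type*} [NormedAddCommGroup X] (ε : ℝ) (a b : X × L → X × L) : Prop :=
  (∀ q, (a (b q)).2 = (b (a q)).2) ∧ ∀ q, ‖(a (b q)).1 - (b (a q)).1‖ ≤ ε

/-!
Write `p : S → L` for the projection to the discrete part. The hypothesis on the actions says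
that each `p ∘ f` factors through `p`, so the same holds for every composite of them, and
a trace maps states with equal discrete parts to states with equal discrete parts. A swap of
two independent actions does not change `p ∘ applyTrace`, because `p (a (b q)) = p (b (a q))`
at the state `q` reached after the common prefix, and the common suffix respects `p`. Swaps only
permute a trace, so the hypothesis on its actions survives along an `ε`-equivalence.
-/

open Function Relation

section Trace

variable {S L A : Type*}

lemma applyTrace_cons (f : S → S) (τ : List (S → S)) (x : S) :
    applyTrace (f :: τ) x = applyTrace τ (f x) := rfl

lemma applyTrace_append (σ τ : List (S → S)) (x : S) :
    applyTrace (σ ++ τ) x = applyTrace τ (applyTrace σ x) :=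
  List.foldl_append

lemma factorsThrough_applyTrace {p : S → L} {τ : List (S → S)}
    (hτ : ∀ f ∈ τ, (p ∘ f).FactorsThrough p) : (p ∘ applyTrace τ).FactorsThrough p := by
  induction τ with
  | nil => exact fun _ _ h => h
  | cons f τ ih =>
    intro q q' h
    exact ih (fun g hg => hτ g (List.mem_cons_of_mem f hg)) (hτ f List.mem_cons_self h)

lemma Swap.perm {indep : A → A → Prop} {τ τ' : List A} (h : Swap indep τ τ') : τ.Perm τ' := by
  obtain ⟨σ, η, a, b, -, rfl, rfl⟩ := h
  exact (List.Perm.swap b a η).append_left σ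

lemma perm_of_reflTransGen_swap {indep : A → A → Prop} {τ τ' : List A}
    (h : ReflTransGen (Swap indep) τ τ') : τ.Perm τ' := by
  induction h with
  | refl => rfl
  | tail _ hswap ih => exact ih.trans hswap.perm

lemma applyTrace_swap {p : S → L} {indep : (S → S) → (S → S) → Prop}
    (hindep : ∀ a b, indep a b → ∀ q, p (a (b q)) = p (b (a q)))
    {τ τ' : List (S → S)} (hτ : ∀ f ∈ τ, (p ∘ f).FactorsThrough p)
    (h : Swap indep τ τ') (q : S) : p (applyTrace τ q) = p (applyTrace τ' q) := by
  obtain ⟨σ, η, a, b, hab, rfl, rfl⟩ := h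
  simp only [applyTrace_append, applyTrace_cons]
  exact factorsThrough_applyTrace (fun f hf => hτ f (by simp [hf])) (hindep a b hab _).symm

theorem applyTrace_eq_of_reflTransGen_swap {p : S → L} {indep : (S → S) → (S → S) → Prop}
    (hindep : ∀ a b, indep a b → ∀ q, p (a (b q)) = p (b (a q)))
    {τ τ' : List (S → S)} (hτ : ∀ f ∈ τ, (p ∘ f).FactorsThrough p)
    (h : ReflTransGen (Swap indep) τ τ') {q q' : S} (hq : p q = p q') :
    p (applyTrace τ q) = p (applyTrace τ' q') := by
  induction h with
  | refl => exact factorsThrough_applyTrace hτ hq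
  | tail hsteps hswap ih =>
    have hσ := fun f hf => hτ f ((perm_of_reflTransGen_swap hsteps).mem_iff.mpr hf)
    exact ih.trans (applyTrace_swap hindep hσ hswap q')

end Trace

/-- If each action's discrete effect depends only on the discrete part, then
`ε`-equivalent traces applied to states with equal discrete parts yield final states
with equal discrete parts. -/
theorem stmt10 {X L : Type*} [NormedAddCommGroup X] (ε : ℝ)
    (τ τ' : List (X × L → X × L))
    (hL : ∀ f ∈ τ, ∀ q q' : X × L, q.2 = q'.2 → (f q).2 = (f q').2)
    (hequiv : Relation.ReflTransGen (Swap (SIndep ε)) τ τ')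
    (q₀ q₀' : X × L) (h0 : q₀.2 = q₀'.2) :
    (applyTrace τ q₀).2 = (applyTrace τ' q₀').2 :=
  applyTrace_eq_of_reflTransGen_swap (fun _ _ hab => hab.1) (fun f hf q q' => hL f hf q q')
    hequiv h0
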